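/- Let μ ∈ (1,2), let l ≥ 1 and t ≥ l, and let λ denote Lebesgue measure. Then λ({x ∈ [0,1) : T(γ^{t−l+i}(x)) = I_{l+i} for all i = 0,1,…,l}) · μ^l · |I_l| = |I_{2l}| · λ({x ∈ [0,1) : T(γ^{t−l}(x)) = I_l}), and the same identity holds with each I replaced by Ī. -/

import Mathlib

/-!
On a cylinder `{x : γ^n(x) = w}` the iterate `f^n` is affine with slope `±μ^n`, so the cylinder
has measure `|T(w)| / μ^n`. The type of `w b` is `f(T(w) ∩ H)`, where the half-line `H` depends
only on `b` and on the last bit of `w`, and that last bit can be read off `T(w)`: nonempty types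
of words ending in `1` are intervals `(p, q]`, those of words ending in `0` are `[p, q)`. Hence
`T(w D)` depends only on `T(w)` and `D`, and `x` follows the path `I_l, …, I_{2l}` from time
`t - l` exactly when `T(γ^{t-l}(x)) = I_l` and the next `l` bits of `x` are the bits `l+1, …, 2l`
of `c_{2l}`. Summing over the words `w` with `T(w) = I_l` gives the two sets measures
`N |I_l| / μ^m` and `N |I_{2l}| / μ^(m+l)`, `m = t - l`, with the same count `N`.
-/

open Set MeasureTheory

/-- The tent map `f(x) = μx` for `x ≤ 1/2` and `μ(1-x)` for `x ≥ 1/2`. -/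
noncomputable def tentMap (μ : ℝ) (x : ℝ) : ℝ :=
  if x ≤ 1/2 then μ * x else μ * (1 - x)

/-- `tentBit μ x k` is the `(k+1)`-st bit `b_{k+1}` of the tent code of `x`. -/
noncomputable def tentBit (μ x : ℝ) : ℕ → Bool
  | 0 => if 1/2 ≤ x then true else false
  | k + 1 =>
    if (tentMap μ)^[k+1] x < 1/2 then tentBit μ x k
    else if 1/2 < (tentMap μ)^[k+1] x then !(tentBit μ x k)
    else true

/-- The tent code `γ^n(x) = b_1 ⋯ b_n`. -/
noncomputable def tentCode (μ : ℝ) (n : ℕ) (x : ℝ) : List Bool :=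
  (List.range n).map (tentBit μ x)

/-- The tent language `L_n = {γ^n(x) : x ∈ [0,1)}`. -/
def tentLang (μ : ℝ) (n : ℕ) : Set (List Bool) :=
  {w | ∃ x ∈ Set.Ico (0:ℝ) 1, tentCode μ n x = w}

/-- The segment-type `T(w) = {f^n(x) : x ∈ [0,1), γ^n(x) = w}`. -/
def segType (μ : ℝ) (n : ℕ) (w : List Bool) : Set ℝ :=
  {y | ∃ x ∈ Set.Ico (0:ℝ) 1, tentCode μ n x = w ∧ (tentMap μ)^[n] x = y}

/-- The set of segment-types `𝒯_n = {T(w) : w ∈ L_n}`. -/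
def typeSet (μ : ℝ) (n : ℕ) : Set (Set ℝ) :=
  {S | ∃ w ∈ tentLang μ n, segType μ n w = S}

/-- `I_i = T(γ^i(1/2))`. -/
noncomputable def Iseg (μ : ℝ) (i : ℕ) : Set ℝ :=
  segType μ i (tentCode μ i (1/2))

/-- `Ī_i = T(c̄_i)` where `c̄_i` is the bitwise complement of `γ^i(1/2)`. -/
noncomputable def Isegbar (μ : ℝ) (i : ℕ) : Set ℝ :=
  segType μ i ((tentCode μ i (1/2)).map (fun b => !b))

/-- The length of the interval `T(w)` (zero if `T(w)` is empty). -/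
noncomputable def segLen (μ : ℝ) (n : ℕ) (w : List Bool) : ℝ :=
  (MeasureTheory.volume (segType μ n w)).toReal

lemma tentMap_of_le {μ x : ℝ} (hx : x ≤ 1/2) : tentMap μ x = μ * x := if_pos hx

lemma tentMap_of_ge {μ x : ℝ} (hx : 1/2 ≤ x) : tentMap μ x = μ * (1 - x) := by
  rcases hx.lt_or_eq with hx | rfl
  · exact if_neg hx.not_ge
  · norm_num [tentMap]

lemma measurable_tentMap (μ : ℝ) : Measurable (tentMap μ) :=
  Measurable.ite measurableSet_Iic (measurable_const.mul measurable_id)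
    (measurable_const.mul (measurable_const.sub measurable_id))

lemma tentCode_succ (μ : ℝ) (n : ℕ) (x : ℝ) :
    tentCode μ (n + 1) x = tentCode μ n x ++ [tentBit μ x n] := by
  simp [tentCode, List.range_succ]

lemma List.map_range_add {α : Type*} (e : ℕ → α) (m k : ℕ) :
    (List.range (m + k)).map e =
      (List.range m).map e ++ (List.range k).map (fun i => e (m + i)) := by
  simp [List.range_add, Function.comp_def]

lemma tentCode_add_eq_append_iff (μ x : ℝ) (m k : ℕ) (d : ℕ → Bool) :
    tentCode μ (m + k) x = tentCode μ m x ++ (List.range k).map d ↔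
      ∀ i < k, tentBit μ x (m + i) = d i := by
  simp [tentCode, List.map_range_add]

def nextBitRegion : Bool → Bool → Set ℝ
  | false, false => Iio (1/2)
  | false, true => Ici (1/2)
  | true, false => Ioi (1/2)
  | true, true => Iic (1/2)

lemma tentBit_eq_iff (μ x : ℝ) (n : ℕ) (b : Bool) :
    tentBit μ x n = b ↔
      (tentMap μ)^[n] x ∈ nextBitRegion ((tentCode μ n x).getLastD false) b := by
  cases n with
  | zero => cases b <;> simp [tentBit, tentCode, nextBitRegion]
  | succ k =>
    rw [tentCode_succ, List.getLastD_concat, tentBit]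
    generalize (tentMap μ)^[k + 1] x = y
    rcases lt_trichotomy y (1/2) with h | rfl | h <;> cases tentBit μ x k <;> cases b <;>
      norm_num [nextBitRegion, *, le_of_lt, not_lt_of_gt]

lemma List.length_induction_append_singleton {α : Type*} {P : ℕ → List α → Prop}
    (nil : P 0 [])
    (of_length_ne : ∀ n w, w.length ≠ n → P n w)
    (append_singleton : ∀ n w b, P n w → P (n + 1) (w ++ [b])) : ∀ n w, P n w := by
  intro n
  induction n with
  | zero =>
    intro w
    rcases List.eq_nil_or_concat w with rfl | ⟨w, b, rfl⟩
    · exact nil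
    · exact of_length_ne _ _ (by simp)
  | succ n ih =>
    intro w
    rcases List.eq_nil_or_concat w with rfl | ⟨w, b, rfl⟩
    · exact of_length_ne _ _ (by simp)
    · rw [List.concat_eq_append]; exact append_singleton n w b (ih w)

def tentCylinder (μ : ℝ) (n : ℕ) (w : List Bool) : Set ℝ :=
  {x ∈ Ico 0 1 | tentCode μ n x = w}

lemma tentCylinder_zero_nil (μ : ℝ) : tentCylinder μ 0 [] = Ico 0 1 := by
  ext x; simp [tentCylinder, tentCode]

lemma tentCylinder_of_length_ne {μ : ℝ} {n : ℕ} {w : List Bool} (h : w.length ≠ n) :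
    tentCylinder μ n w = ∅ :=
  eq_empty_of_forall_notMem fun x hx => h (by simp [← hx.2, tentCode])

lemma tentCylinder_append_singleton (μ : ℝ) (n : ℕ) (w : List Bool) (b : Bool) :
    tentCylinder μ (n + 1) (w ++ [b]) =
      tentCylinder μ n w ∩ (tentMap μ)^[n] ⁻¹' nextBitRegion (w.getLastD false) b := by
  ext x
  simp only [tentCylinder, mem_inter_iff, mem_sep_iff, mem_preimage, tentCode_succ,
    List.append_singleton_inj, and_assoc]
  constructor
  · rintro ⟨hx, rfl, hb⟩
    exact ⟨hx, rfl, (tentBit_eq_iff μ x n b).1 hb⟩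
  · rintro ⟨hx, rfl, h⟩
    exact ⟨hx, rfl, (tentBit_eq_iff μ x n b).2 h⟩

lemma measurableSet_nextBitRegion (β b : Bool) : MeasurableSet (nextBitRegion β b) := by
  cases β <;> cases b <;> simp [nextBitRegion]

lemma measurableSet_tentCylinder (μ : ℝ) :
    ∀ n w, MeasurableSet (tentCylinder μ n w) := by
  refine List.length_induction_append_singleton ?_ ?_ ?_
  · rw [tentCylinder_zero_nil]; exact measurableSet_Ico
  · intro n w h; rw [tentCylinder_of_length_ne h]; exact MeasurableSet.empty
  · intro n w b h
    rw [tentCylinder_append_singleton]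
    exact h.inter ((measurable_tentMap μ).iterate n (measurableSet_nextBitRegion _ _))

lemma segType_eq_image (μ : ℝ) (n : ℕ) (w : List Bool) :
    segType μ n w = (tentMap μ)^[n] '' tentCylinder μ n w := by
  ext y
  simp [segType, tentCylinder, and_assoc]

lemma segType_zero_nil (μ : ℝ) : segType μ 0 [] = Ico 0 1 := by
  simp [segType_eq_image, tentCylinder_zero_nil]

lemma segType_of_length_ne {μ : ℝ} {n : ℕ} {w : List Bool} (h : w.length ≠ n) :
    segType μ n w = ∅ := by
  rw [segType_eq_image, tentCylinder_of_length_ne h, image_empty]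

lemma segType_append_singleton (μ : ℝ) (n : ℕ) (w : List Bool) (b : Bool) :
    segType μ (n + 1) (w ++ [b]) =
      tentMap μ '' (segType μ n w ∩ nextBitRegion (w.getLastD false) b) := by
  rw [segType_eq_image, segType_eq_image, tentCylinder_append_singleton,
    Function.iterate_succ', image_comp, image_inter_preimage]

lemma mem_segType_tentCode {μ x : ℝ} (hx : x ∈ Ico 0 1) (n : ℕ) :
    (tentMap μ)^[n] x ∈ segType μ n (tentCode μ n x) :=
  ⟨x, hx, rfl, rfl⟩

lemma nextBitRegion_subset (β b : Bool) :
    nextBitRegion β b ⊆ Iic (1/2) ∨ nextBitRegion β b ⊆ Ici (1/2) := by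
  cases β <;> cases b <;> simp [nextBitRegion]

lemma exists_eqOn_tentMap_affine {μ : ℝ} (hμ : 0 ≤ μ) (β b : Bool) :
    ∃ a d : ℝ, |a| = μ ∧ EqOn (tentMap μ) (fun z => a * z + d) (nextBitRegion β b) := by
  rcases nextBitRegion_subset β b with h | h
  · exact ⟨μ, 0, abs_of_nonneg hμ, fun z hz => by simp [tentMap_of_le (h hz)]⟩
  · refine ⟨-μ, μ, by simp [abs_of_nonneg hμ], fun z hz => ?_⟩
    simp only [tentMap_of_ge (h hz)]
    ring

lemma exists_eqOn_iterate_affine {μ : ℝ} (hμ : 0 ≤ μ) :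
    ∀ n w, ∃ a c : ℝ, |a| = μ ^ n ∧
      EqOn (tentMap μ)^[n] (fun x => a * x + c) (tentCylinder μ n w) := by
  refine List.length_induction_append_singleton ?_ ?_ ?_
  · exact ⟨1, 0, by simp, fun x _ => by simp⟩
  · intro n w h
    exact ⟨μ ^ n, 0, abs_of_nonneg (pow_nonneg hμ n), by simp [tentCylinder_of_length_ne h]⟩
  · rintro n w b ⟨a, c, ha, hf⟩
    obtain ⟨a', d, ha', hg⟩ := exists_eqOn_tentMap_affine hμ (w.getLastD false) b
    refine ⟨a' * a, a' * c + d, by rw [abs_mul, ha, ha', pow_succ'], fun x hx => ?_⟩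
    rw [tentCylinder_append_singleton] at hx
    rw [Function.iterate_succ_apply', hg hx.2, hf hx.1]
    ring

open scoped Pointwise in
lemma Real.volume_image_affine (a c : ℝ) (s : Set ℝ) :
    volume ((fun x => a * x + c) '' s) = ENNReal.ofReal |a| * volume s := by
  have : (fun x => a * x + c) '' s = (· + c) '' (a • s) := by
    rw [← image_smul, image_image]; rfl
  simp [this, Measure.addHaar_smul]

lemma volume_segType {μ : ℝ} (hμ : 0 ≤ μ) (n : ℕ) (w : List Bool) :
    volume (segType μ n w) = ENNReal.ofReal (μ ^ n) * volume (tentCylinder μ n w) := by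
  obtain ⟨a, c, ha, hf⟩ := exists_eqOn_iterate_affine hμ n w
  rw [segType_eq_image, hf.image_eq, Real.volume_image_affine, ha]

def IsBitInterval (b : Bool) (S : Set ℝ) : Prop :=
  ∃ p q : ℝ, S = if b then Ioc p q else Ico p q

lemma isBitInterval_empty (b : Bool) : IsBitInterval b ∅ :=
  ⟨0, 0, by cases b <;> simp⟩

lemma Ioc_ne_Ico_of_nonempty {α : Type*} [LinearOrder α] [DenselyOrdered α] {p q p' q' : α}
    (h : (Ico p' q').Nonempty) : Ioc p q ≠ Ico p' q' := by
  intro hPQ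
  have hp' : p' ∈ Ioc p q := hPQ ▸ left_mem_Ico.2 (nonempty_Ico.1 h)
  obtain ⟨z, hpz, hzp'⟩ := exists_between hp'.1
  have hz : z ∈ Ico p' q' := hPQ ▸ ⟨hpz, hzp'.le.trans hp'.2⟩
  exact hz.1.not_gt hzp'

lemma IsBitInterval.eq {β β' : Bool} {S : Set ℝ} (h : IsBitInterval β S)
    (h' : IsBitInterval β' S) (hS : S.Nonempty) : β = β' := by
  obtain ⟨p, q, rfl⟩ := h
  obtain ⟨p', q', h'⟩ := h'
  cases β <;> cases β' <;> simp only [Bool.false_eq_true, if_true, if_false] at h' hS ⊢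
  · exact (Ioc_ne_Ico_of_nonempty hS h'.symm).elim
  · exact (Ioc_ne_Ico_of_nonempty (h' ▸ hS) h').elim

lemma IsBitInterval.image_tentMap_inter {μ : ℝ} (hμ : 0 < μ) {β : Bool} {S : Set ℝ}
    (h : IsBitInterval β S) (b : Bool) :
    IsBitInterval b (tentMap μ '' (S ∩ nextBitRegion β b)) := by
  obtain ⟨p, q, rfl⟩ := h
  have hinc (T : Set ℝ) (hT : T ⊆ Iic (1/2)) : tentMap μ '' T = (μ * ·) '' T :=
    image_congr fun x hx => tentMap_of_le (hT hx)
  have hdec (T : Set ℝ) (hT : T ⊆ Ici (1/2)) :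
      tentMap μ '' T = (μ * ·) '' ((1 - ·) '' T) := by
    rw [image_image]; exact image_congr fun x hx => tentMap_of_ge (hT hx)
  cases β <;> cases b <;> simp only [Bool.false_eq_true, if_true, if_false, nextBitRegion]
  · rw [Ico_inter_Iio, hinc _ fun x hx => hx.2.le.trans (min_le_right _ _), image_mul_left_Ico hμ]
    exact ⟨_, _, rfl⟩
  · rw [Ico_inter_Ici, hdec _ fun x hx => le_sup_right.trans hx.1, image_const_sub_Ico,
      image_mul_left_Ioc hμ]
    exact ⟨_, _, rfl⟩
  · rw [Ioc_inter_Ioi, hdec _ fun x hx => (le_sup_right.trans_lt hx.1).le, image_const_sub_Ioc,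
      image_mul_left_Ico hμ]
    exact ⟨_, _, rfl⟩
  · rw [Ioc_inter_Iic, hinc _ fun x hx => hx.2.trans inf_le_right, image_mul_left_Ioc hμ]
    exact ⟨_, _, rfl⟩

lemma isBitInterval_segType {μ : ℝ} (hμ : 0 < μ) :
    ∀ n w, IsBitInterval (w.getLastD false) (segType μ n w) := by
  refine List.length_induction_append_singleton ?_ ?_ ?_
  · exact ⟨0, 1, by simp [segType_zero_nil]⟩
  · intro n w h; rw [segType_of_length_ne h]; exact isBitInterval_empty _
  · intro n w b h
    rw [segType_append_singleton, List.getLastD_concat]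
    exact h.image_tentMap_inter hμ b

lemma eq_of_segType_append_singleton_eq {μ : ℝ} (hμ : 0 < μ) {n j : ℕ} {u v : List Bool}
    {b b' : Bool} (h : segType μ (n + 1) (u ++ [b]) = segType μ (j + 1) (v ++ [b']))
    (hne : (segType μ (n + 1) (u ++ [b])).Nonempty) : b = b' := by
  have hv := isBitInterval_segType hμ (j + 1) (v ++ [b'])
  rw [← h, List.getLastD_concat] at hv
  simpa using (isBitInterval_segType hμ (n + 1) (u ++ [b])).eq hv hne

lemma segType_append_singleton_congr {μ : ℝ} (hμ : 0 < μ) {n j : ℕ} {u v : List Bool}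
    (h : segType μ n u = segType μ j v) (b : Bool) :
    segType μ (n + 1) (u ++ [b]) = segType μ (j + 1) (v ++ [b]) := by
  rw [segType_append_singleton, segType_append_singleton, h]
  rcases (segType μ j v).eq_empty_or_nonempty with hS | hS
  · simp [hS]
  · have hu := isBitInterval_segType hμ n u
    rw [h] at hu
    rw [hu.eq (isBitInterval_segType hμ j v) hS]

lemma segType_append_congr {μ : ℝ} (hμ : 0 < μ) {n j : ℕ} {u v : List Bool}
    (h : segType μ n u = segType μ j v) (D : List Bool) :
    segType μ (n + D.length) (u ++ D) = segType μ (j + D.length) (v ++ D) := by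
  induction D using List.reverseRecOn with
  | nil => simpa using h
  | append_singleton D b ih =>
    simp only [List.length_append, List.length_singleton, ← add_assoc, ← List.append_assoc]
    exact segType_append_singleton_congr hμ ih b

lemma volume_biUnion_tentCylinder {μ : ℝ} (hμ : 0 ≤ μ) {n : ℕ} {S : Set ℝ}
    {W : Set (List Bool)} (hW : ∀ w ∈ W, segType μ n w = S) :
    ENNReal.ofReal (μ ^ n) * volume (⋃ w ∈ W, tentCylinder μ n w) = W.encard * volume S := by
  have hdisj : W.PairwiseDisjoint (tentCylinder μ n) := fun w _ w' _ hne =>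
    disjoint_left.2 fun x hx hx' => hne (hx.2.symm.trans hx'.2)
  rw [measure_biUnion W.to_countable hdisj fun w _ => measurableSet_tentCylinder μ n w,
    ← ENNReal.tsum_mul_left, ← ENNReal.tsum_set_const]
  exact tsum_congr fun w => by rw [← volume_segType hμ, hW w w.2]

lemma setOf_segType_eq_biUnion (μ : ℝ) (m : ℕ) (S : Set ℝ) :
    {x ∈ Ico 0 1 | segType μ m (tentCode μ m x) = S} =
      ⋃ w ∈ {w | segType μ m w = S}, tentCylinder μ m w := by
  ext x
  simp [tentCylinder]

lemma forall_segType_eq_iff {μ : ℝ} (hμ : 0 < μ) (e : ℕ → Bool) (m l : ℕ) {x : ℝ}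
    (hx : x ∈ Ico 0 1) :
    (∀ i ≤ l, segType μ (m + i) (tentCode μ (m + i) x) =
        segType μ (l + i) ((List.range (l + i)).map e)) ↔
      segType μ m (tentCode μ m x) = segType μ l ((List.range l).map e) ∧
        ∀ i < l, tentBit μ x (m + i) = e (l + i) := by
  constructor
  · intro h
    refine ⟨h 0 l.zero_le, fun i hi => ?_⟩
    have hi := h (i + 1) hi
    rw [← add_assoc, ← add_assoc, tentCode_succ, List.range_succ, List.map_append,
      List.map_singleton] at hi
    refine eq_of_segType_append_singleton_eq hμ hi ⟨(tentMap μ)^[m + i + 1] x, ?_⟩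
    rw [← tentCode_succ]
    exact mem_segType_tentCode hx _
  · rintro ⟨h0, hbits⟩ i hi
    have hcode : tentCode μ (m + i) x = tentCode μ m x ++ (List.range i).map (e <| l + ·) :=
      (tentCode_add_eq_append_iff μ x m i _).2 fun k hk => hbits k (by omega)
    simpa [hcode, List.map_range_add] using
      segType_append_congr hμ h0 ((List.range i).map (e <| l + ·))

lemma setOf_forall_segType_eq_biUnion {μ : ℝ} (hμ : 0 < μ) (e : ℕ → Bool) (m l : ℕ) :
    {x ∈ Ico 0 1 | ∀ i ≤ l, segType μ (m + i) (tentCode μ (m + i) x) =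
        segType μ (l + i) ((List.range (l + i)).map e)} =
      ⋃ w ∈ (· ++ (List.range l).map (e <| l + ·)) ''
          {w | segType μ m w = segType μ l ((List.range l).map e)},
        tentCylinder μ (m + l) w := by
  ext x
  simp only [mem_sep_iff, mem_iUnion, mem_image, exists_prop, tentCylinder]
  constructor
  · rintro ⟨hx, h⟩
    obtain ⟨h0, hbits⟩ := (forall_segType_eq_iff hμ e m l hx).1 h
    exact ⟨_, ⟨_, h0, rfl⟩, hx, (tentCode_add_eq_append_iff μ x m l _).2 hbits⟩
  · rintro ⟨_, ⟨w, hw, rfl⟩, hx, hcode⟩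
    obtain ⟨rfl, -⟩ :=
      List.append_inj' ((List.map_range_add (tentBit μ x) m l).symm.trans hcode) (by simp)
    exact ⟨hx, (forall_segType_eq_iff hμ e m l hx).2
      ⟨hw, (tentCode_add_eq_append_iff μ x m l _).1 hcode⟩⟩

theorem volume_setOf_forall_segType_eq_mul {μ : ℝ} (hμ : 0 < μ) (e : ℕ → Bool)
    (m l : ℕ) :
    (volume {x ∈ Ico (0:ℝ) 1 | ∀ i ≤ l, segType μ (m + i) (tentCode μ (m + i) x) =
        segType μ (l + i) ((List.range (l + i)).map e)}).toReal *
      (μ ^ l * (volume (segType μ l ((List.range l).map e))).toReal) =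
    (volume (segType μ (l + l) ((List.range (l + l)).map e))).toReal *
      (volume {x ∈ Ico (0:ℝ) 1 |
        segType μ m (tentCode μ m x) = segType μ l ((List.range l).map e)}).toReal := by
  set W := {w | segType μ m w = segType μ l ((List.range l).map e)}
  set D := (List.range l).map (e <| l + ·)
  -- `W.encard` may be `⊤`; all that matters is that it is a common factor of both measures.
  have hA := volume_biUnion_tentCylinder hμ.le (W := W) fun w hw => hw
  have hB := volume_biUnion_tentCylinder hμ.le (n := m + l) (W := (· ++ D) '' W)
    (S := segType μ (l + l) ((List.range (l + l)).map e)) (by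
      rintro _ ⟨w, hw, rfl⟩
      simpa [D, List.map_range_add] using segType_append_congr hμ hw D)
  rw [← setOf_segType_eq_biUnion] at hA
  rw [(List.append_left_injective D).injOn.encard_image,
    ← setOf_forall_segType_eq_biUnion hμ] at hB
  have hA' := congrArg ENNReal.toReal hA
  have hB' := congrArg ENNReal.toReal hB
  simp only [ENNReal.toReal_mul, ENNReal.toReal_ofReal (pow_nonneg hμ.le _)] at hA' hB'
  apply mul_left_cancel₀ (pow_ne_zero m hμ.ne')
  linear_combination (volume (segType μ l ((List.range l).map e))).toReal * hB' -
    (volume (segType μ (l + l) ((List.range (l + l)).map e))).toReal * hA'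

theorem go_back_prob_general (μ : ℝ) (hμ1 : 1 < μ)
    (l t : ℕ) :
    ((volume {x ∈ Set.Ico (0:ℝ) 1 | ∀ i ≤ l,
          segType μ (t - l + i) (tentCode μ (t - l + i) x) = Iseg μ (l + i)}).toReal *
        (μ ^ l * (volume (Iseg μ l)).toReal) =
      (volume (Iseg μ (2*l))).toReal *
        (volume {x ∈ Set.Ico (0:ℝ) 1 |
          segType μ (t - l) (tentCode μ (t - l) x) = Iseg μ l}).toReal) ∧
    ((volume {x ∈ Set.Ico (0:ℝ) 1 | ∀ i ≤ l,
          segType μ (t - l + i) (tentCode μ (t - l + i) x) = Isegbar μ (l + i)}).toReal *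
        (μ ^ l * (volume (Isegbar μ l)).toReal) =
      (volume (Isegbar μ (2*l))).toReal *
        (volume {x ∈ Set.Ico (0:ℝ) 1 |
          segType μ (t - l) (tentCode μ (t - l) x) = Isegbar μ l}).toReal) := by
  have hμ : 0 < μ := one_pos.trans hμ1
  have hIsegbar (i : ℕ) :
      Isegbar μ i = segType μ i ((List.range i).map fun k => !tentBit μ (1/2) k) := by
    simp [Isegbar, tentCode, Function.comp_def]
  rw [two_mul]
  refine ⟨volume_setOf_forall_segType_eq_mul hμ (tentBit μ (1/2)) (t - l) l, ?_⟩
  simp only [hIsegbar]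
  exact volume_setOf_forall_segType_eq_mul hμ _ (t - l) l

/-- the probability of going up from level `l` to level `2l`
along `I_l, I_{l+1}, …, I_{2l}` equals `|I_{2l}| / (μ^l |I_l|)`, and the same for `Ī`. -/
theorem go_back_prob (μ : ℝ) (hμ1 : 1 < μ) (hμ2 : μ < 2)
    (l t : ℕ) (hl : 1 ≤ l) (ht : l ≤ t) :
    ((volume {x ∈ Set.Ico (0:ℝ) 1 | ∀ i ≤ l,
          segType μ (t - l + i) (tentCode μ (t - l + i) x) = Iseg μ (l + i)}).toReal *
        (μ ^ l * (volume (Iseg μ l)).toReal) =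
      (volume (Iseg μ (2*l))).toReal *
        (volume {x ∈ Set.Ico (0:ℝ) 1 |
          segType μ (t - l) (tentCode μ (t - l) x) = Iseg μ l}).toReal) ∧
    ((volume {x ∈ Set.Ico (0:ℝ) 1 | ∀ i ≤ l,
          segType μ (t - l + i) (tentCode μ (t - l + i) x) = Isegbar μ (l + i)}).toReal *
        (μ ^ l * (volume (Isegbar μ l)).toReal) =
      (volume (Isegbar μ (2*l))).toReal *
        (volume {x ∈ Set.Ico (0:ℝ) 1 |
          segType μ (t - l) (tentCode μ (t - l) x) = Isegbar μ l}).toReal) :=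
  go_back_prob_general μ hμ1 l t
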